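/- arXiv:2407.21637 — 3 statements merged into one kernel-verified Lean document; each statement's English description precedes it below -/
import Mathlib

section
/- Fix integers ℓ ≥ 1, m ≥ 1 and set n = 2^ℓ·m. Let H, H̃ be n×n real matrices and ε ≥ 0. Assume that for every level k ∈ {1,…,ℓ} and every sibling off-diagonal block index pair (i,j) at level k, ‖H̃_{ij}^{(k)} − H_{ij}^{(k)}‖_F ≤ ε‖H_{ij}^{(k)}‖_F, and that H̃_{ii}^{(ℓ)} = H_{ii}^{(ℓ)} for every i ∈ {1,…,2^ℓ}. Then for every k ∈ {0,…,ℓ} and every i ∈ {1,…,2^k}, the diagonal blocks satisfy ‖H̃_{ii}^{(k)} − H_{ii}^{(k)}‖_F ≤ ε‖H_{ii}^{(k)}‖_F; in particular ‖H̃ − H‖_F ≤ ε‖H‖_F. -/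
/-- Frobenius norm of a real matrix: `‖M‖_F = (Σ_{i,j} m_{ij}²)^{1/2}`. -/
noncomputable def frob {α β : Type*} [Fintype α] [Fintype β] (A : Matrix α β ℝ) : ℝ :=
  Real.sqrt (∑ i, ∑ j, (A i j) ^ 2)

/-- For an `n × n` matrix with `n = 2^ℓ·m`, the level-`k` block `M_{ij}^{(k)}`
(0-based block indices `i, j`): the square submatrix of size `2^(ℓ-k)·m` whose
rows are `{i·2^(ℓ-k)·m, …, (i+1)·2^(ℓ-k)·m − 1}` and whose columns are
`{j·2^(ℓ-k)·m, …, (j+1)·2^(ℓ-k)·m − 1}` (and `0` outside the index range, which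
never occurs for valid block indices `i, j < 2^k`). -/
def blk (ℓ m : ℕ) (M : Matrix (Fin (2 ^ ℓ * m)) (Fin (2 ^ ℓ * m)) ℝ) (k i j : ℕ) :
    Matrix (Fin (2 ^ (ℓ - k) * m)) (Fin (2 ^ (ℓ - k) * m)) ℝ :=
  Matrix.of fun a b =>
    if h : i * (2 ^ (ℓ - k) * m) + a.val < 2 ^ ℓ * m ∧
           j * (2 ^ (ℓ - k) * m) + b.val < 2 ^ ℓ * m then
      M ⟨i * (2 ^ (ℓ - k) * m) + a.val, h.1⟩ ⟨j * (2 ^ (ℓ - k) * m) + b.val, h.2⟩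
    else 0

/-- Sum of squares of the entries. -/
noncomputable def sumsq {α β : Type*} [Fintype α] [Fintype β] (A : Matrix α β ℝ) : ℝ :=
  ∑ i, ∑ j, (A i j) ^ 2

lemma sumsq_nonneg {α β : Type*} [Fintype α] [Fintype β] (A : Matrix α β ℝ) :
    0 ≤ sumsq A :=
  Finset.sum_nonneg fun _ _ => Finset.sum_nonneg fun _ _ => sq_nonneg _

lemma frob_eq_sqrt_sumsq {α β : Type*} [Fintype α] [Fintype β] (A : Matrix α β ℝ) :
    frob A = Real.sqrt (sumsq A) := rfl

lemma frob_le_iff {α β γ δ : Type*} [Fintype α] [Fintype β] [Fintype γ] [Fintype δ]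
    (A : Matrix α β ℝ) (B : Matrix γ δ ℝ) {c : ℝ} (hc : 0 ≤ c) :
    frob A ≤ c * frob B ↔ sumsq A ≤ c ^ 2 * sumsq B := by
  rw [frob_eq_sqrt_sumsq, frob_eq_sqrt_sumsq,
    show c * Real.sqrt (sumsq B) = Real.sqrt (c ^ 2 * sumsq B) by
      rw [Real.sqrt_mul (sq_nonneg c), Real.sqrt_sq hc],
    Real.sqrt_le_sqrt_iff (mul_nonneg (sq_nonneg c) (sumsq_nonneg B))]

/-- Extension of a matrix to a function on all of ℕ × ℕ (zero outside). -/
def ext (ℓ m : ℕ) (M : Matrix (Fin (2 ^ ℓ * m)) (Fin (2 ^ ℓ * m)) ℝ) (r c : ℕ) : ℝ :=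
  if h : r < 2 ^ ℓ * m ∧ c < 2 ^ ℓ * m then M ⟨r, h.1⟩ ⟨c, h.2⟩ else 0

lemma sumsq_zero {α β : Type*} [Fintype α] [Fintype β] :
    sumsq (0 : Matrix α β ℝ) = 0 := by simp [sumsq]

lemma blk_apply (ℓ m : ℕ) (M : Matrix (Fin (2 ^ ℓ * m)) (Fin (2 ^ ℓ * m)) ℝ) (k i j : ℕ)
    (a b : Fin (2 ^ (ℓ - k) * m)) :
    blk ℓ m M k i j a b =
      ext ℓ m M (i * (2 ^ (ℓ - k) * m) + a.val) (j * (2 ^ (ℓ - k) * m) + b.val) := rfl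

lemma sumsq_blk (ℓ m : ℕ) (M : Matrix (Fin (2 ^ ℓ * m)) (Fin (2 ^ ℓ * m)) ℝ) (k i j : ℕ) :
    sumsq (blk ℓ m M k i j) =
      ∑ a ∈ Finset.range (2 ^ (ℓ - k) * m), ∑ b ∈ Finset.range (2 ^ (ℓ - k) * m),
        (ext ℓ m M (i * (2 ^ (ℓ - k) * m) + a) (j * (2 ^ (ℓ - k) * m) + b)) ^ 2 := by
  unfold sumsq
  simp only [blk_apply]
  rw [Fin.sum_univ_eq_sum_range (fun a => ∑ b : Fin (2 ^ (ℓ - k) * m),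
    (ext ℓ m M (i * (2 ^ (ℓ - k) * m) + a) (j * (2 ^ (ℓ - k) * m) + b.val)) ^ 2)]
  refine Finset.sum_congr rfl fun a _ => ?_
  rw [Fin.sum_univ_eq_sum_range (fun b =>
    (ext ℓ m M (i * (2 ^ (ℓ - k) * m) + a) (j * (2 ^ (ℓ - k) * m) + b)) ^ 2)]

lemma split_sum (N : ℕ) (g : ℕ → ℝ) (i : ℕ) :
    ∑ a ∈ Finset.range (2 * N), g (i * (2 * N) + a) =
      (∑ a ∈ Finset.range N, g (2 * i * N + a)) +
      ∑ a ∈ Finset.range N, g ((2 * i + 1) * N + a) := by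
  rw [two_mul N, Finset.sum_range_add]
  congr 1
  · exact Finset.sum_congr rfl fun a _ => by ring_nf
  · exact Finset.sum_congr rfl fun a _ => by ring_nf

lemma sumsq_blk_split (ℓ m : ℕ) (M : Matrix (Fin (2 ^ ℓ * m)) (Fin (2 ^ ℓ * m)) ℝ)
    (k i j : ℕ) (hk : k < ℓ) :
    sumsq (blk ℓ m M k i j) =
      sumsq (blk ℓ m M (k + 1) (2 * i) (2 * j)) +
      sumsq (blk ℓ m M (k + 1) (2 * i) (2 * j + 1)) +
      sumsq (blk ℓ m M (k + 1) (2 * i + 1) (2 * j)) +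
      sumsq (blk ℓ m M (k + 1) (2 * i + 1) (2 * j + 1)) := by
  have hsz : 2 ^ (ℓ - k) * m = 2 * (2 ^ (ℓ - (k + 1)) * m) := by
    rw [← mul_assoc, ← pow_succ']
    congr 2
    omega
  set N := 2 ^ (ℓ - (k + 1)) * m with hN
  rw [sumsq_blk, sumsq_blk, sumsq_blk, sumsq_blk, sumsq_blk, hsz]
  rw [split_sum N (fun r => ∑ b ∈ Finset.range (2 * N),
    (ext ℓ m M r (j * (2 * N) + b)) ^ 2) i]
  have hcol : ∀ r : ℕ, ∑ b ∈ Finset.range (2 * N), (ext ℓ m M r (j * (2 * N) + b)) ^ 2 =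
      (∑ b ∈ Finset.range N, (ext ℓ m M r (2 * j * N + b)) ^ 2) +
      ∑ b ∈ Finset.range N, (ext ℓ m M r ((2 * j + 1) * N + b)) ^ 2 := fun r =>
    split_sum N (fun c => (ext ℓ m M r c) ^ 2) j
  rw [Finset.sum_congr rfl (fun a _ => hcol (2 * i * N + a)),
    Finset.sum_congr rfl (fun a _ => hcol ((2 * i + 1) * N + a)),
    Finset.sum_add_distrib, Finset.sum_add_distrib]
  ring

lemma blk_sub (ℓ m : ℕ) (A B : Matrix (Fin (2 ^ ℓ * m)) (Fin (2 ^ ℓ * m)) ℝ) (k i j : ℕ) :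
    blk ℓ m (A - B) k i j = blk ℓ m A k i j - blk ℓ m B k i j := by
  ext a b
  simp only [blk, Matrix.of_apply, Matrix.sub_apply]
  split <;> simp

lemma blk_zero_eq (ℓ m : ℕ) (M : Matrix (Fin (2 ^ ℓ * m)) (Fin (2 ^ ℓ * m)) ℝ) :
    blk ℓ m M 0 0 0 = M := by
  ext a b
  simp only [blk, Matrix.of_apply, Nat.sub_zero, zero_mul, zero_add]
  rw [dif_pos ⟨a.isLt, b.isLt⟩]
  exact congrArg₂ M (Fin.ext rfl) (Fin.ext rfl)

/-- If every sibling off-diagonal block of `H̃` at every level `k ∈ {1,…,ℓ}` is within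
relative distance `ε` of the corresponding block of `H`, and the level-`ℓ` diagonal
blocks agree, then every diagonal block at every level `k ∈ {0,…,ℓ}` (and in
particular the whole matrix, `k = 0`) is within relative distance `ε`. -/
theorem hodlr_diag_block_perturbation (ℓ m : ℕ) (hℓ : 1 ≤ ℓ) (hm : 1 ≤ m)
    (ε : ℝ) (hε : 0 ≤ ε)
    (H Ht : Matrix (Fin (2 ^ ℓ * m)) (Fin (2 ^ ℓ * m)) ℝ)
    (hoff : ∀ k, 1 ≤ k → k ≤ ℓ → ∀ t < 2 ^ (k - 1),
      frob (blk ℓ m Ht k (2 * t) (2 * t + 1) - blk ℓ m H k (2 * t) (2 * t + 1))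
        ≤ ε * frob (blk ℓ m H k (2 * t) (2 * t + 1)) ∧
      frob (blk ℓ m Ht k (2 * t + 1) (2 * t) - blk ℓ m H k (2 * t + 1) (2 * t))
        ≤ ε * frob (blk ℓ m H k (2 * t + 1) (2 * t)))
    (hdiag : ∀ i < 2 ^ ℓ, blk ℓ m Ht ℓ i i = blk ℓ m H ℓ i i) :
    (∀ k ≤ ℓ, ∀ i < 2 ^ k,
      frob (blk ℓ m Ht k i i - blk ℓ m H k i i) ≤ ε * frob (blk ℓ m H k i i)) ∧
    frob (Ht - H) ≤ ε * frob H := by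
  set E := Ht - H with hE
  have main : ∀ d k, k + d = ℓ → ∀ i < 2 ^ k,
      sumsq (blk ℓ m E k i i) ≤ ε ^ 2 * sumsq (blk ℓ m H k i i) := by
    intro d
    induction d with
    | zero =>
      intro k hk i hi
      obtain rfl : k = ℓ := by omega
      rw [hE, blk_sub, hdiag i hi, sub_self, sumsq_zero]
      exact mul_nonneg (sq_nonneg ε) (sumsq_nonneg _)
    | succ d ih =>
      intro k hk i hi
      have hkl : k < ℓ := by omega
      have hk1 : k + 1 ≤ ℓ := hkl
      have hstep : ∀ j < 2 ^ (k + 1),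
          sumsq (blk ℓ m E (k + 1) j j) ≤ ε ^ 2 * sumsq (blk ℓ m H (k + 1) j j) :=
        ih (k + 1) (by omega)
      have h2i : 2 * i < 2 ^ (k + 1) := by
        have : 2 ^ (k + 1) = 2 * 2 ^ k := by rw [pow_succ]; ring
        omega
      have h2i1 : 2 * i + 1 < 2 ^ (k + 1) := by
        have : 2 ^ (k + 1) = 2 * 2 ^ k := by rw [pow_succ]; ring
        omega
      have hoff' := hoff (k + 1) (by omega) hk1 i (by simpa using hi)
      have hoA : sumsq (blk ℓ m E (k + 1) (2 * i) (2 * i + 1)) ≤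
          ε ^ 2 * sumsq (blk ℓ m H (k + 1) (2 * i) (2 * i + 1)) := by
        have := (frob_le_iff _ _ hε).mp hoff'.1
        rwa [hE, blk_sub]
      have hoB : sumsq (blk ℓ m E (k + 1) (2 * i + 1) (2 * i)) ≤
          ε ^ 2 * sumsq (blk ℓ m H (k + 1) (2 * i + 1) (2 * i)) := by
        have := (frob_le_iff _ _ hε).mp hoff'.2
        rwa [hE, blk_sub]
      rw [sumsq_blk_split ℓ m E k i i hkl, sumsq_blk_split ℓ m H k i i hkl]
      have hdA := hstep (2 * i) h2i
      have hdB := hstep (2 * i + 1) h2i1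
      nlinarith [hdA, hdB, hoA, hoB]
  have key : ∀ k ≤ ℓ, ∀ i < 2 ^ k,
      frob (blk ℓ m Ht k i i - blk ℓ m H k i i) ≤ ε * frob (blk ℓ m H k i i) := by
    intro k hk i hi
    rw [frob_le_iff _ _ hε, ← blk_sub, ← hE]
    exact main (ℓ - k) k (by omega) i hi
  refine ⟨key, ?_⟩
  have h0 := key 0 (by omega) 0 (by norm_num)
  rwa [blk_zero_eq, blk_zero_eq] at h0
end

section
/- Fix integers ℓ ≥ 1, m ≥ 1 and set n = 2^ℓ·m. Let H, H̃, Ĥ be n×n real matrices, let p ≥ 0, ε ≥ 0, u* ≥ 0, and let ξ_1,…,ξ_ℓ ≥ 0 and u_1,…,u_ℓ ∈ [0, u*] be real numbers. Assume: (a) for every level k ∈ {1,…,ℓ}, every sibling off-diagonal block satisfies ‖H̃_{ij}^{(k)}‖_F ≤ ξ_k ‖H̃‖_F and ‖H̃_{ij}^{(k)} − Ĥ_{ij}^{(k)}‖_F ≤ (2 + √p·u_k)·u_k·‖H̃_{ij}^{(k)}‖_F; (b) Ĥ_{ii}^{(ℓ)} = H̃_{ii}^{(ℓ)} for all i; (c)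 ‖H̃ − H‖_F ≤ ε‖H‖_F; (d) the precisions are chosen so that 2^{k/2}·ξ_k·u_k ≤ ε for every k ∈ {1,…,ℓ}. Then ‖H − Ĥ‖_F ≤ ( (2 + √p·u*)·√(2ℓ)·ε·(1+ε) + ε )·‖H‖_F. -/
namespace HodlrAux

open Finset

noncomputable def toE {α β : Type*} [Fintype α] [Fintype β] (A : Matrix α β ℝ) :
    EuclideanSpace ℝ (α × β) := WithLp.toLp 2 (fun p : α × β => A p.1 p.2)

lemma frob_eq_norm {α β : Type*} [Fintype α] [Fintype β] (A : Matrix α β ℝ) :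
    frob A = ‖toE A‖ := by
  rw [frob, EuclideanSpace.norm_eq]
  congr 1
  rw [Fintype.sum_prod_type]
  simp [toE, Real.norm_eq_abs, sq_abs]

lemma toE_sub {α β : Type*} [Fintype α] [Fintype β] (A B : Matrix α β ℝ) :
    toE (A - B) = toE A - toE B := rfl

lemma frob_nonneg {α β : Type*} [Fintype α] [Fintype β] (A : Matrix α β ℝ) : 0 ≤ frob A :=
  Real.sqrt_nonneg _

lemma frob_sq {α β : Type*} [Fintype α] [Fintype β] (A : Matrix α β ℝ) :
    frob A ^ 2 = ∑ i, ∑ j, (A i j) ^ 2 :=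
  Real.sq_sqrt (by positivity)

lemma frob_sub_comm {α β : Type*} [Fintype α] [Fintype β] (A B : Matrix α β ℝ) :
    frob (A - B) = frob (B - A) := by
  rw [frob_eq_norm, frob_eq_norm, toE_sub, toE_sub, norm_sub_rev]

lemma frob_tri {α β : Type*} [Fintype α] [Fintype β] (A B C : Matrix α β ℝ) :
    frob (A - C) ≤ frob (A - B) + frob (B - C) := by
  rw [frob_eq_norm, frob_eq_norm, frob_eq_norm, toE_sub, toE_sub, toE_sub]
  exact norm_sub_le_norm_sub_add_norm_sub _ _ _

lemma frob_le_sub_add {α β : Type*} [Fintype α] [Fintype β] (A B : Matrix α β ℝ) :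
    frob A ≤ frob (A - B) + frob B := by
  rw [frob_eq_norm, frob_eq_norm, frob_eq_norm, toE_sub]
  have h := norm_add_le (toE A - toE B) (toE B)
  rwa [sub_add_cancel] at h

lemma aux_lt {N s i : ℕ} (hiN : (i + 1) * s ≤ N) (a : Fin s) : i * s + (a : ℕ) < N :=
  lt_of_lt_of_le (Nat.add_lt_add_left a.isLt _)
    (le_trans (le_of_eq (add_one_mul i s).symm) hiN)

lemma sum_ite_div {N s i : ℕ} (hs : 0 < s) (hiN : (i + 1) * s ≤ N) (f : Fin N → ℝ) :
    (∑ a : Fin N, if (a : ℕ) / s = i then f a else 0)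
      = ∑ a' : Fin s, f ⟨i * s + a'.val, aux_lt hiN a'⟩ := by
  rw [← Finset.sum_filter]
  refine Finset.sum_bij' (fun a _ => (⟨(a : ℕ) % s, Nat.mod_lt _ hs⟩ : Fin s))
    (fun a' _ => (⟨i * s + a'.val, aux_lt hiN a'⟩ : Fin N))
    ?_ ?_ ?_ ?_ ?_
  · intro a _; exact Finset.mem_univ _
  · intro a' _
    simp only [Finset.mem_filter, Finset.mem_univ, true_and]
    have h0 : (a' : ℕ) / s = 0 := Nat.div_eq_of_lt a'.isLt
    show (i * s + (a' : ℕ)) / s = i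
    rw [add_comm, Nat.add_mul_div_right _ _ hs, h0, zero_add]
  · intro a ha
    simp only [Finset.mem_filter, Finset.mem_univ, true_and] at ha
    apply Fin.ext
    show i * s + (a : ℕ) % s = (a : ℕ)
    have h := Nat.div_add_mod' (a : ℕ) s
    rw [ha] at h
    exact h
  · intro a' _
    apply Fin.ext
    show (i * s + (a' : ℕ)) % s = (a' : ℕ)
    rw [add_comm, Nat.add_mul_mod_self_right, Nat.mod_eq_of_lt a'.isLt]
  · intro a ha
    simp only [Finset.mem_filter, Finset.mem_univ, true_and] at ha
    congr 1
    apply Fin.ext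
    show (a : ℕ) = i * s + (a : ℕ) % s
    have h := Nat.div_add_mod' (a : ℕ) s
    rw [ha] at h
    exact h.symm

lemma sum_swap4 {α β : Type*} [Fintype α] [Fintype β] {γ δ : Type*}
    (sf : Finset γ) (tf : γ → Finset δ) (F : α → β → γ → δ → ℝ) :
    (∑ a : α, ∑ b : β, ∑ k ∈ sf, ∑ t ∈ tf k, F a b k t)
      = ∑ k ∈ sf, ∑ t ∈ tf k, ∑ a : α, ∑ b : β, F a b k t :=
  calc (∑ a : α, ∑ b : β, ∑ k ∈ sf, ∑ t ∈ tf k, F a b k t)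
      = ∑ p : α × β, ∑ k ∈ sf, ∑ t ∈ tf k, F p.1 p.2 k t :=
        (Fintype.sum_prod_type
          (f := fun p : α × β => ∑ k ∈ sf, ∑ t ∈ tf k, F p.1 p.2 k t)).symm
    _ = ∑ k ∈ sf, ∑ p : α × β, ∑ t ∈ tf k, F p.1 p.2 k t := Finset.sum_comm
    _ = ∑ k ∈ sf, ∑ t ∈ tf k, ∑ a : α, ∑ b : β, F a b k t := by
        refine Finset.sum_congr rfl fun k _ => ?_
        rw [Finset.sum_comm]
        exact Finset.sum_congr rfl fun t _ => Fintype.sum_prod_type _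

lemma blk_apply (L m : ℕ) (M : Matrix (Fin (2 ^ L * m)) (Fin (2 ^ L * m)) ℝ) (k i j : ℕ)
    (a b : Fin (2 ^ (L - k) * m))
    (h1 : i * (2 ^ (L - k) * m) + (a : ℕ) < 2 ^ L * m)
    (h2 : j * (2 ^ (L - k) * m) + (b : ℕ) < 2 ^ L * m) :
    blk L m M k i j a b = M ⟨i * (2 ^ (L - k) * m) + (a : ℕ), h1⟩
      ⟨j * (2 ^ (L - k) * m) + (b : ℕ), h2⟩ := by
  simp only [blk, Matrix.of_apply]
  rw [dif_pos ⟨h1, h2⟩]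

lemma block_le_N {L m k i : ℕ} (hk : k ≤ L) (hi : i < 2 ^ k) :
    (i + 1) * (2 ^ (L - k) * m) ≤ 2 ^ L * m := by
  calc (i + 1) * (2 ^ (L - k) * m) ≤ 2 ^ k * (2 ^ (L - k) * m) :=
        Nat.mul_le_mul_right _ (by omega)
    _ = 2 ^ L * m := by rw [← mul_assoc, ← pow_add]; congr 2; omega

lemma frob_blk_sub_sq (L m : ℕ) (hm : 1 ≤ m)
    (A B : Matrix (Fin (2 ^ L * m)) (Fin (2 ^ L * m)) ℝ)
    (k i j : ℕ) (hk : k ≤ L) (hi : i < 2 ^ k) (hj : j < 2 ^ k) :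
    frob (blk L m A k i j - blk L m B k i j) ^ 2
      = ∑ a : Fin (2 ^ L * m), ∑ b : Fin (2 ^ L * m),
          (if (a : ℕ) / (2 ^ (L - k) * m) = i ∧ (b : ℕ) / (2 ^ (L - k) * m) = j
            then (A a b - B a b) ^ 2 else 0) := by
  have hs : 0 < 2 ^ (L - k) * m := by positivity
  have hiN := block_le_N (m := m) hk hi
  have hjN := block_le_N (m := m) hk hj
  have h1 : ∀ a : Fin (2 ^ L * m),
      (∑ b : Fin (2 ^ L * m), if (a : ℕ) / (2 ^ (L - k) * m) = i ∧
          (b : ℕ) / (2 ^ (L - k) * m) = j then (A a b - B a b) ^ 2 else 0)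
      = (if (a : ℕ) / (2 ^ (L - k) * m) = i then
          (∑ b : Fin (2 ^ L * m), if (b : ℕ) / (2 ^ (L - k) * m) = j
            then (A a b - B a b) ^ 2 else 0) else 0) := by
    intro a
    by_cases h : (a : ℕ) / (2 ^ (L - k) * m) = i
    · rw [if_pos h]
      refine Finset.sum_congr rfl fun b _ => ?_
      by_cases hb : (b : ℕ) / (2 ^ (L - k) * m) = j
      · rw [if_pos ⟨h, hb⟩, if_pos hb]
      · rw [if_neg (fun hc => hb hc.2), if_neg hb]
    · rw [if_neg h]
      exact Finset.sum_eq_zero fun b _ => if_neg (fun hc => h hc.1)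
  rw [Finset.sum_congr rfl fun a _ => h1 a, sum_ite_div hs hiN]
  rw [Finset.sum_congr rfl fun a' _ => sum_ite_div hs hjN _]
  rw [frob_sq]
  refine Finset.sum_congr rfl fun a' _ => Finset.sum_congr rfl fun b' _ => ?_
  rw [Matrix.sub_apply, blk_apply L m A k i j a' b' (aux_lt hiN a') (aux_lt hjN b'),
    blk_apply L m B k i j a' b' (aux_lt hiN a') (aux_lt hjN b')]

lemma blk_top_apply (L m : ℕ) (hm : 0 < m) (M : Matrix (Fin (2 ^ L * m)) (Fin (2 ^ L * m)) ℝ)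
    (a b : Fin (2 ^ L * m)) (i j : ℕ) (hia : i = (a : ℕ) / m) (hjb : j = (b : ℕ) / m) :
    blk L m M L i j ⟨(a : ℕ) % m, by simpa using Nat.mod_lt (a : ℕ) hm⟩
      ⟨(b : ℕ) % m, by simpa using Nat.mod_lt (b : ℕ) hm⟩ = M a b := by
  have hm' : 2 ^ (L - L) * m = m := by simp
  have ha : i * (2 ^ (L - L) * m) + (a : ℕ) % m = (a : ℕ) := by
    rw [hm', hia]; exact Nat.div_add_mod' (a : ℕ) m
  have hb : j * (2 ^ (L - L) * m) + (b : ℕ) % m = (b : ℕ) := by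
    rw [hm', hjb]; exact Nat.div_add_mod' (b : ℕ) m
  simp only [blk, Matrix.of_apply]
  rw [dif_pos ⟨by rw [ha]; exact a.isLt, by rw [hb]; exact b.isLt⟩]
  congr 1
  · exact Fin.ext ha
  · exact Fin.ext hb

lemma coverage (L m : ℕ) (hm : 1 ≤ m) (a b : Fin (2 ^ L * m))
    (hab : (a : ℕ) / m ≠ (b : ℕ) / m) :
    ∃ k t, 1 ≤ k ∧ k ≤ L ∧ t < 2 ^ (k - 1) ∧
      (((a : ℕ) / (2 ^ (L - k) * m) = 2 * t ∧ (b : ℕ) / (2 ^ (L - k) * m) = 2 * t + 1) ∨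
       ((a : ℕ) / (2 ^ (L - k) * m) = 2 * t + 1 ∧ (b : ℕ) / (2 ^ (L - k) * m) = 2 * t)) := by
  have hex : ∃ k, (a : ℕ) / (2 ^ (L - k) * m) ≠ (b : ℕ) / (2 ^ (L - k) * m) := by
    refine ⟨L, ?_⟩
    simpa using hab
  classical
  set k := Nat.find hex with hkdef
  have hPk : (a : ℕ) / (2 ^ (L - k) * m) ≠ (b : ℕ) / (2 ^ (L - k) * m) := Nat.find_spec hex
  have hkL : k ≤ L := Nat.find_min' hex (by simpa using hab)
  have hk0 : k ≠ 0 := by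
    intro h
    rw [h] at hPk
    have ha0 : (a : ℕ) / (2 ^ (L - 0) * m) = 0 := Nat.div_eq_of_lt (by simpa using a.isLt)
    have hb0 : (b : ℕ) / (2 ^ (L - 0) * m) = 0 := Nat.div_eq_of_lt (by simpa using b.isLt)
    exact hPk (ha0.trans hb0.symm)
  have hk1 : 1 ≤ k := Nat.one_le_iff_ne_zero.mpr hk0
  have hprev : ¬ ((a : ℕ) / (2 ^ (L - (k-1)) * m) ≠ (b : ℕ) / (2 ^ (L - (k-1)) * m)) :=
    Nat.find_min hex (by omega)
  push_neg at hprev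
  have h2 : 2 ^ (L - (k - 1)) * m = (2 ^ (L - k) * m) * 2 := by
    rw [show L - (k - 1) = (L - k) + 1 by omega, pow_succ]; ring
  have hi2 : (a : ℕ) / (2 ^ (L - k) * m) / 2 = (b : ℕ) / (2 ^ (L - k) * m) / 2 := by
    rw [Nat.div_div_eq_div_mul, Nat.div_div_eq_div_mul, ← h2]
    exact hprev
  set t := (a : ℕ) / (2 ^ (L - k) * m) / 2 with htdef
  have hNeq : 2 ^ (L - k) * m * 2 * 2 ^ (k - 1) = 2 ^ L * m := by
    calc 2 ^ (L-k) * m * 2 * 2 ^ (k-1) = (2 ^ (L-k) * 2 ^ 1 * 2 ^ (k-1)) * m := by ring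
      _ = 2 ^ ((L-k) + 1 + (k-1)) * m := by rw [pow_add, pow_add]
      _ = 2 ^ L * m := by congr 2; omega
  have ht : t < 2 ^ (k - 1) := by
    rw [htdef, Nat.div_div_eq_div_mul]
    apply Nat.div_lt_of_lt_mul
    rw [hNeq]
    exact a.isLt
  exact ⟨k, t, hk1, hkL, ht, by omega⟩

end HodlrAux

set_option maxHeartbeats 1000000 in
open HodlrAux Finset in
/-- Global error of the adaptive mixed-precision HODLR representation: if `H̃` is a
`(T_ℓ, p, ε)`-HODLR approximation of `H` and `Ĥ` stores the level-`k` off-diagonal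
blocks at precision `u_k` chosen by the rule `2^(k/2)·ξ_k·u_k ≤ ε`, then
`‖H − Ĥ‖_F ≤ ((2 + √p·u*)·√(2ℓ)·ε·(1+ε) + ε)·‖H‖_F`. -/
theorem hodlr_adaptive_precision_global_error (ℓ m : ℕ) (hℓ : 1 ≤ ℓ) (hm : 1 ≤ m)
    (p : ℝ) (hp : 0 ≤ p) (ε : ℝ) (hε : 0 ≤ ε) (ustar : ℝ) (hustar : 0 ≤ ustar)
    (H Ht Hh : Matrix (Fin (2 ^ ℓ * m)) (Fin (2 ^ ℓ * m)) ℝ)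
    (ξ u : ℕ → ℝ)
    (hξ : ∀ k, 1 ≤ k → k ≤ ℓ → 0 ≤ ξ k)
    (hu : ∀ k, 1 ≤ k → k ≤ ℓ → 0 ≤ u k ∧ u k ≤ ustar)
    (hmag : ∀ k, 1 ≤ k → k ≤ ℓ → ∀ t < 2 ^ (k - 1),
      frob (blk ℓ m Ht k (2 * t) (2 * t + 1)) ≤ ξ k * frob Ht ∧
      frob (blk ℓ m Ht k (2 * t + 1) (2 * t)) ≤ ξ k * frob Ht)
    (herr : ∀ k, 1 ≤ k → k ≤ ℓ → ∀ t < 2 ^ (k - 1),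
      frob (blk ℓ m Ht k (2 * t) (2 * t + 1) - blk ℓ m Hh k (2 * t) (2 * t + 1))
        ≤ (2 + Real.sqrt p * u k) * u k * frob (blk ℓ m Ht k (2 * t) (2 * t + 1)) ∧
      frob (blk ℓ m Ht k (2 * t + 1) (2 * t) - blk ℓ m Hh k (2 * t + 1) (2 * t))
        ≤ (2 + Real.sqrt p * u k) * u k * frob (blk ℓ m Ht k (2 * t + 1) (2 * t)))
    (hdiag : ∀ i < 2 ^ ℓ, blk ℓ m Hh ℓ i i = blk ℓ m Ht ℓ i i)
    (happrox : frob (Ht - H) ≤ ε * frob H)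
    (hchoice : ∀ k, 1 ≤ k → k ≤ ℓ → Real.sqrt ((2 : ℝ) ^ k) * ξ k * u k ≤ ε) :
    frob (H - Hh)
      ≤ ((2 + Real.sqrt p * ustar) * Real.sqrt (2 * (ℓ : ℝ)) * ε * (1 + ε) + ε) * frob H := by
  classical
  have hsp : 0 ≤ Real.sqrt p := Real.sqrt_nonneg p
  set C : ℝ := 2 + Real.sqrt p * ustar with hCdef
  have hC0 : 0 ≤ C := by
    have : 0 ≤ Real.sqrt p * ustar := mul_nonneg hsp hustar
    rw [hCdef]; linarith
  have hfH := frob_nonneg H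
  have hfHt := frob_nonneg Ht
  have hfD := frob_nonneg (Ht - Hh)
  -- diagonal entries of the difference vanish
  have hdz : ∀ a b : Fin (2 ^ ℓ * m), (a : ℕ) / m = (b : ℕ) / m → Ht a b - Hh a b = 0 := by
    intro a b hab
    have hi : (a : ℕ) / m < 2 ^ ℓ :=
      Nat.div_lt_of_lt_mul (lt_of_lt_of_eq a.isLt (Nat.mul_comm _ _))
    have key := hdiag ((a : ℕ) / m) hi
    have h1 := blk_top_apply ℓ m (by omega) Ht a b ((a : ℕ) / m) ((a : ℕ) / m) rfl hab
    have h2 := blk_top_apply ℓ m (by omega) Hh a b ((a : ℕ) / m) ((a : ℕ) / m) rfl hab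
    have : Ht a b = Hh a b := by rw [← h1, ← key, h2]
    rw [this, sub_self]
  have hsq : frob (Ht - Hh) ^ 2
      = ∑ a : Fin (2 ^ ℓ * m), ∑ b : Fin (2 ^ ℓ * m), (Ht a b - Hh a b) ^ 2 := by
    rw [frob_sq]
    exact Finset.sum_congr rfl fun a _ => Finset.sum_congr rfl fun b _ => by
      rw [Matrix.sub_apply]
  -- Step A : entrywise sum is bounded by the sum of sibling-block squares
  have key : (∑ a : Fin (2 ^ ℓ * m), ∑ b : Fin (2 ^ ℓ * m), (Ht a b - Hh a b) ^ 2)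
      ≤ ∑ k ∈ Finset.Icc 1 ℓ, ∑ t ∈ Finset.range (2 ^ (k - 1)),
          (frob (blk ℓ m Ht k (2*t) (2*t+1) - blk ℓ m Hh k (2*t) (2*t+1)) ^ 2
           + frob (blk ℓ m Ht k (2*t+1) (2*t) - blk ℓ m Hh k (2*t+1) (2*t)) ^ 2) := by
    have hpoint : ∀ a b : Fin (2 ^ ℓ * m), (Ht a b - Hh a b) ^ 2
        ≤ ∑ k ∈ Finset.Icc 1 ℓ, ∑ t ∈ Finset.range (2 ^ (k - 1)),
            ((if (a : ℕ) / (2 ^ (ℓ - k) * m) = 2*t ∧ (b : ℕ) / (2 ^ (ℓ - k) * m) = 2*t+1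
                then (Ht a b - Hh a b) ^ 2 else 0)
             + (if (a : ℕ) / (2 ^ (ℓ - k) * m) = 2*t+1 ∧ (b : ℕ) / (2 ^ (ℓ - k) * m) = 2*t
                then (Ht a b - Hh a b) ^ 2 else 0)) := by
      intro a b
      by_cases hab : (a : ℕ) / m = (b : ℕ) / m
      · rw [hdz a b hab]
        simp
      · obtain ⟨k, t, hk1, hkL, ht, hcase⟩ := coverage ℓ m hm a b hab
        refine le_trans ?_ (Finset.single_le_sum
          (f := fun k => ∑ t ∈ Finset.range (2 ^ (k - 1)),
            ((if (a : ℕ) / (2 ^ (ℓ - k) * m) = 2*t ∧ (b : ℕ) / (2 ^ (ℓ - k) * m) = 2*t+1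
                then (Ht a b - Hh a b) ^ 2 else 0)
             + (if (a : ℕ) / (2 ^ (ℓ - k) * m) = 2*t+1 ∧ (b : ℕ) / (2 ^ (ℓ - k) * m) = 2*t
                then (Ht a b - Hh a b) ^ 2 else 0)))
          (fun i _ => Finset.sum_nonneg fun t _ => by
            have h1 : (0:ℝ) ≤ _ := le_refl 0
            apply add_nonneg <;> · split_ifs <;> positivity)
          (Finset.mem_Icc.mpr ⟨hk1, hkL⟩))
        refine le_trans ?_ (Finset.single_le_sum
          (f := fun t =>
            ((if (a : ℕ) / (2 ^ (ℓ - k) * m) = 2*t ∧ (b : ℕ) / (2 ^ (ℓ - k) * m) = 2*t+1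
                then (Ht a b - Hh a b) ^ 2 else 0)
             + (if (a : ℕ) / (2 ^ (ℓ - k) * m) = 2*t+1 ∧ (b : ℕ) / (2 ^ (ℓ - k) * m) = 2*t
                then (Ht a b - Hh a b) ^ 2 else 0)))
          (fun t _ => by apply add_nonneg <;> · split_ifs <;> positivity)
          (Finset.mem_range.mpr ht))
        rcases hcase with ⟨h1, h2⟩ | ⟨h1, h2⟩
        · simp [h1, h2]
        · simp [h1, h2]
    calc (∑ a : Fin (2 ^ ℓ * m), ∑ b : Fin (2 ^ ℓ * m), (Ht a b - Hh a b) ^ 2)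
        ≤ ∑ a : Fin (2 ^ ℓ * m), ∑ b : Fin (2 ^ ℓ * m),
            ∑ k ∈ Finset.Icc 1 ℓ, ∑ t ∈ Finset.range (2 ^ (k - 1)),
              ((if (a : ℕ) / (2 ^ (ℓ - k) * m) = 2*t ∧ (b : ℕ) / (2 ^ (ℓ - k) * m) = 2*t+1
                  then (Ht a b - Hh a b) ^ 2 else 0)
               + (if (a : ℕ) / (2 ^ (ℓ - k) * m) = 2*t+1 ∧ (b : ℕ) / (2 ^ (ℓ - k) * m) = 2*t
                  then (Ht a b - Hh a b) ^ 2 else 0)) :=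
          Finset.sum_le_sum fun a _ => Finset.sum_le_sum fun b _ => hpoint a b
      _ = ∑ k ∈ Finset.Icc 1 ℓ, ∑ t ∈ Finset.range (2 ^ (k - 1)),
            ∑ a : Fin (2 ^ ℓ * m), ∑ b : Fin (2 ^ ℓ * m),
              ((if (a : ℕ) / (2 ^ (ℓ - k) * m) = 2*t ∧ (b : ℕ) / (2 ^ (ℓ - k) * m) = 2*t+1
                  then (Ht a b - Hh a b) ^ 2 else 0)
               + (if (a : ℕ) / (2 ^ (ℓ - k) * m) = 2*t+1 ∧ (b : ℕ) / (2 ^ (ℓ - k) * m) = 2*t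
                  then (Ht a b - Hh a b) ^ 2 else 0)) :=
          sum_swap4 _ _ _
      _ = ∑ k ∈ Finset.Icc 1 ℓ, ∑ t ∈ Finset.range (2 ^ (k - 1)),
          (frob (blk ℓ m Ht k (2*t) (2*t+1) - blk ℓ m Hh k (2*t) (2*t+1)) ^ 2
           + frob (blk ℓ m Ht k (2*t+1) (2*t) - blk ℓ m Hh k (2*t+1) (2*t)) ^ 2) := by
          refine Finset.sum_congr rfl fun k hk => Finset.sum_congr rfl fun t htt => ?_
          obtain ⟨hk1, hkL⟩ := Finset.mem_Icc.mp hk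
          have ht' := Finset.mem_range.mp htt
          have h2k : 2 * 2 ^ (k - 1) = 2 ^ k := by
            rw [← pow_succ']; congr 1; omega
          rw [frob_blk_sub_sq ℓ m hm Ht Hh k (2*t) (2*t+1) hkL (by omega) (by omega),
            frob_blk_sub_sq ℓ m hm Ht Hh k (2*t+1) (2*t) hkL (by omega) (by omega),
            ← Finset.sum_add_distrib]
          exact Finset.sum_congr rfl fun a _ => Finset.sum_add_distrib
  -- Step B : bound the block sums
  have hS : (∑ k ∈ Finset.Icc 1 ℓ, ∑ t ∈ Finset.range (2 ^ (k - 1)),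
          (frob (blk ℓ m Ht k (2*t) (2*t+1) - blk ℓ m Hh k (2*t) (2*t+1)) ^ 2
           + frob (blk ℓ m Ht k (2*t+1) (2*t) - blk ℓ m Hh k (2*t+1) (2*t)) ^ 2))
      ≤ (ℓ : ℝ) * (C * ε * frob Ht) ^ 2 := by
    have hkt : ∀ k ∈ Finset.Icc 1 ℓ, ∀ t ∈ Finset.range (2 ^ (k - 1)),
        (frob (blk ℓ m Ht k (2*t) (2*t+1) - blk ℓ m Hh k (2*t) (2*t+1)) ^ 2
           + frob (blk ℓ m Ht k (2*t+1) (2*t) - blk ℓ m Hh k (2*t+1) (2*t)) ^ 2)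
          ≤ 2 * ((C * ε) ^ 2 / (2:ℝ) ^ k * frob Ht ^ 2) := by
      intro k hk t htt
      obtain ⟨hk1, hkL⟩ := Finset.mem_Icc.mp hk
      have ht := Finset.mem_range.mp htt
      obtain ⟨hmag1, hmag2⟩ := hmag k hk1 hkL t ht
      obtain ⟨herr1, herr2⟩ := herr k hk1 hkL t ht
      obtain ⟨hu0, huu⟩ := hu k hk1 hkL
      have hξ0 := hξ k hk1 hkL
      have hch := hchoice k hk1 hkL
      have hck : 0 ≤ 2 + Real.sqrt p * u k := by nlinarith
      have hCk : 2 + Real.sqrt p * u k ≤ C := by rw [hCdef]; nlinarith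
      have hsq2k : (2:ℝ) ^ k * (ξ k * u k) ^ 2 ≤ ε ^ 2 := by
        have hnn : 0 ≤ Real.sqrt ((2:ℝ) ^ k) * ξ k * u k :=
          mul_nonneg (mul_nonneg (Real.sqrt_nonneg _) hξ0) hu0
        have h := pow_le_pow_left₀ hnn hch 2
        have hs2 : Real.sqrt ((2:ℝ) ^ k) ^ 2 = (2:ℝ) ^ k := Real.sq_sqrt (by positivity)
        nlinarith [h, hs2]
      have hblk : ∀ (i j : ℕ),
          frob (blk ℓ m Ht k i j) ≤ ξ k * frob Ht →
          frob (blk ℓ m Ht k i j - blk ℓ m Hh k i j)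
            ≤ (2 + Real.sqrt p * u k) * u k * frob (blk ℓ m Ht k i j) →
          frob (blk ℓ m Ht k i j - blk ℓ m Hh k i j) ^ 2
            ≤ (C * ε) ^ 2 / (2:ℝ) ^ k * frob Ht ^ 2 := by
        intro i j hm1 he1
        have hd0 := frob_nonneg (blk ℓ m Ht k i j - blk ℓ m Hh k i j)
        have h1 : frob (blk ℓ m Ht k i j - blk ℓ m Hh k i j)
            ≤ C * ((ξ k * u k) * frob Ht) := by
          have step1 : frob (blk ℓ m Ht k i j - blk ℓ m Hh k i j)
              ≤ (2 + Real.sqrt p * u k) * u k * (ξ k * frob Ht) :=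
            le_trans he1 (mul_le_mul_of_nonneg_left hm1 (mul_nonneg hck hu0))
          have hnn : 0 ≤ u k * (ξ k * frob Ht) :=
            mul_nonneg hu0 (mul_nonneg hξ0 hfHt)
          nlinarith [mul_le_mul_of_nonneg_right hCk hnn]
        have h2 := pow_le_pow_left₀ hd0 h1 2
        have h3 : (ξ k * u k) ^ 2 ≤ ε ^ 2 / (2:ℝ) ^ k := by
          rw [le_div_iff₀ (by positivity)]
          nlinarith [hsq2k]
        calc frob (blk ℓ m Ht k i j - blk ℓ m Hh k i j) ^ 2
            ≤ (C * ((ξ k * u k) * frob Ht)) ^ 2 := h2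
          _ = C ^ 2 * frob Ht ^ 2 * (ξ k * u k) ^ 2 := by ring
          _ ≤ C ^ 2 * frob Ht ^ 2 * (ε ^ 2 / (2:ℝ) ^ k) :=
              mul_le_mul_of_nonneg_left h3 (by positivity)
          _ = (C * ε) ^ 2 / (2:ℝ) ^ k * frob Ht ^ 2 := by ring
      have b1 := hblk (2*t) (2*t+1) hmag1 herr1
      have b2 := hblk (2*t+1) (2*t) hmag2 herr2
      linarith
    calc (∑ k ∈ Finset.Icc 1 ℓ, ∑ t ∈ Finset.range (2 ^ (k - 1)),
          (frob (blk ℓ m Ht k (2*t) (2*t+1) - blk ℓ m Hh k (2*t) (2*t+1)) ^ 2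
           + frob (blk ℓ m Ht k (2*t+1) (2*t) - blk ℓ m Hh k (2*t+1) (2*t)) ^ 2))
        ≤ ∑ k ∈ Finset.Icc 1 ℓ, ∑ t ∈ Finset.range (2 ^ (k - 1)),
            2 * ((C * ε) ^ 2 / (2:ℝ) ^ k * frob Ht ^ 2) :=
          Finset.sum_le_sum fun k hk => Finset.sum_le_sum fun t ht => hkt k hk t ht
      _ = ∑ k ∈ Finset.Icc 1 ℓ, (C * ε * frob Ht) ^ 2 := by
          refine Finset.sum_congr rfl fun k hk => ?_
          obtain ⟨hk1, _⟩ := Finset.mem_Icc.mp hk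
          rw [Finset.sum_const, Finset.card_range, nsmul_eq_mul]
          have h2k : ((2:ℝ) ^ (k-1)) * 2 = 2 ^ k := by
            rw [← pow_succ]; congr 1; omega
          have hne : ((2:ℝ) ^ k) ≠ 0 := by positivity
          push_cast
          field_simp
          nlinarith [h2k, sq_nonneg (C * ε * frob Ht)]
      _ = (ℓ : ℝ) * (C * ε * frob Ht) ^ 2 := by
          rw [Finset.sum_const, Nat.card_Icc, nsmul_eq_mul]
          simp
  -- combine
  have hD2 : frob (Ht - Hh) ^ 2 ≤ (ℓ : ℝ) * (C * ε * frob Ht) ^ 2 := by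
    rw [hsq]; exact le_trans key hS
  have hD : frob (Ht - Hh) ≤ Real.sqrt (ℓ : ℝ) * (C * ε * frob Ht) := by
    have h0 : 0 ≤ C * ε * frob Ht := by positivity
    have h := Real.sqrt_le_sqrt hD2
    rw [Real.sqrt_sq hfD] at h
    rwa [Real.sqrt_mul (Nat.cast_nonneg ℓ), Real.sqrt_sq h0] at h
  have hHt : frob Ht ≤ (1 + ε) * frob H := by
    have h := frob_le_sub_add Ht H
    linarith
  have h2l : Real.sqrt (ℓ : ℝ) ≤ Real.sqrt (2 * (ℓ : ℝ)) :=
    Real.sqrt_le_sqrt (by have := Nat.cast_nonneg (α := ℝ) ℓ; linarith)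
  have hHmHt : frob (H - Ht) ≤ ε * frob H := by
    rw [frob_sub_comm]; exact happrox
  have hfin : frob (Ht - Hh) ≤ Real.sqrt (2 * (ℓ : ℝ)) * (C * ε * ((1 + ε) * frob H)) := by
    calc frob (Ht - Hh) ≤ Real.sqrt (ℓ : ℝ) * (C * ε * frob Ht) := hD
      _ ≤ Real.sqrt (ℓ : ℝ) * (C * ε * ((1 + ε) * frob H)) :=
          mul_le_mul_of_nonneg_left
            (mul_le_mul_of_nonneg_left hHt (by positivity)) (Real.sqrt_nonneg _)
      _ ≤ Real.sqrt (2 * (ℓ : ℝ)) * (C * ε * ((1 + ε) * frob H)) :=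
          mul_le_mul_of_nonneg_right h2l (by positivity)
  calc frob (H - Hh) ≤ frob (H - Ht) + frob (Ht - Hh) := frob_tri H Ht Hh
    _ ≤ ε * frob H + Real.sqrt (2 * (ℓ : ℝ)) * (C * ε * ((1 + ε) * frob H)) :=
        add_le_add hHmHt hfin
    _ = (C * Real.sqrt (2 * (ℓ : ℝ)) * ε * (1 + ε) + ε) * frob H := by ring
end

section
/- Let m ≥ 1 and let H11, H12, H21, H22, L11, L21, L22, U11, U12, U22 be m×m real matrices; set H = [[H11, H12],[H21, H22]], L = [[L11, 0],[L21, L22]] and U = [[U11, U12],[0, U22]] (2×2 block matrices). Let α, β, δ, ρ, κ ≥ 0 and assume: (a) ‖L11·U11 − H11‖_F ≤ α·‖H11‖_F + β·‖L11‖_F·‖U11‖_F; (b) ‖L11·U12 − H12‖_F ≤ ρ·‖L11‖_F·‖U12‖_F; (c) ‖L21·U11 − H21‖_F ≤ ρ·‖L21‖_F·‖U11‖_F; (d) ‖L21·U12 + L22·U22 − H22‖_F ≤ δ·‖H22‖_F + κ·‖L21‖_F·‖U12‖_F + β·‖L22‖_F·‖U22‖_F. Then L·U = H + ΔH with ‖ΔH‖_F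 ≤ (α + δ)·‖H‖_F + (2β + 2ρ + κ)·‖L‖_F·‖U‖_F. -/
set_option maxHeartbeats 1000000

lemma frob_nonneg {α β : Type*} [Fintype α] [Fintype β] (A : Matrix α β ℝ) : 0 ≤ frob A :=
  Real.sqrt_nonneg _

lemma frob_sq {α β : Type*} [Fintype α] [Fintype β] (A : Matrix α β ℝ) :
    frob A ^ 2 = ∑ i, ∑ j, (A i j) ^ 2 :=
  Real.sq_sqrt (Finset.sum_nonneg fun _ _ => Finset.sum_nonneg fun _ _ => sq_nonneg _)

lemma frob_fromBlocks_sq {m : ℕ} (A B C D : Matrix (Fin m) (Fin m) ℝ) :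
    frob (Matrix.fromBlocks A B C D) ^ 2 = frob A ^ 2 + frob B ^ 2 + frob C ^ 2 + frob D ^ 2 := by
  simp only [frob_sq, Fintype.sum_sum_type, Matrix.fromBlocks]
  simp [Finset.sum_add_distrib]
  ring

/-- Inductive combination step in the backward error analysis of the recursive HODLR LU
factorization: given blockwise backward error bounds for the two recursive LU calls
(constants `α`, `β` and `δ`, `β`), the triangular solves (constant `ρ`) and the Schur
complement (constant `κ`), the assembled factorization satisfies `L·U = H + ΔH` with
`‖ΔH‖_F ≤ (α + δ)·‖H‖_F + (2β + 2ρ + κ)·‖L‖_F·‖U‖_F`. -/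
theorem block_lu_backward_error_inductive_step (m : ℕ) (hm : 1 ≤ m)
    (H11 H12 H21 H22 L11 L21 L22 U11 U12 U22 : Matrix (Fin m) (Fin m) ℝ)
    (a b d ρ κ : ℝ) (hA : 0 ≤ a) (hB : 0 ≤ b) (hD : 0 ≤ d) (hρ : 0 ≤ ρ) (hκ : 0 ≤ κ)
    (ha : frob (L11 * U11 - H11) ≤ a * frob H11 + b * frob L11 * frob U11)
    (hb : frob (L11 * U12 - H12) ≤ ρ * frob L11 * frob U12)
    (hc : frob (L21 * U11 - H21) ≤ ρ * frob L21 * frob U11)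
    (hd : frob (L21 * U12 + L22 * U22 - H22)
      ≤ d * frob H22 + κ * frob L21 * frob U12 + b * frob L22 * frob U22) :
    frob (Matrix.fromBlocks L11 0 L21 L22 * Matrix.fromBlocks U11 U12 0 U22
        - Matrix.fromBlocks H11 H12 H21 H22)
      ≤ (a + d) * frob (Matrix.fromBlocks H11 H12 H21 H22)
        + (2 * b + 2 * ρ + κ)
          * frob (Matrix.fromBlocks L11 0 L21 L22)
          * frob (Matrix.fromBlocks U11 U12 0 U22) := by
  have key : Matrix.fromBlocks L11 0 L21 L22 * Matrix.fromBlocks U11 U12 0 U22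
      - Matrix.fromBlocks H11 H12 H21 H22
      = Matrix.fromBlocks (L11 * U11 - H11) (L11 * U12 - H12) (L21 * U11 - H21)
          (L21 * U12 + L22 * U22 - H22) := by
    rw [Matrix.fromBlocks_multiply]
    simp only [sub_eq_add_neg, ← Matrix.fromBlocks_neg, ← Matrix.fromBlocks_add,
      Matrix.mul_zero, Matrix.zero_mul, add_zero, zero_add]
  -- block frob ≤ whole frob
  have blk : ∀ A B C D : Matrix (Fin m) (Fin m) ℝ,
      frob A ≤ frob (Matrix.fromBlocks A B C D) ∧
      frob B ≤ frob (Matrix.fromBlocks A B C D) ∧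
      frob C ≤ frob (Matrix.fromBlocks A B C D) ∧
      frob D ≤ frob (Matrix.fromBlocks A B C D) := by
    intro A B C D
    have h := frob_fromBlocks_sq A B C D
    have nA := frob_nonneg A; have nB := frob_nonneg B; have nC := frob_nonneg C
    have nD := frob_nonneg D; have nF := frob_nonneg (Matrix.fromBlocks A B C D)
    refine ⟨?_, ?_, ?_, ?_⟩ <;> nlinarith [h, nA, nB, nC, nD, nF, sq_nonneg (frob A),
      sq_nonneg (frob B), sq_nonneg (frob C), sq_nonneg (frob D)]
  -- frob fromBlocks ≤ sum of block frobs
  have sum_blk : ∀ A B C D : Matrix (Fin m) (Fin m) ℝ,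
      frob (Matrix.fromBlocks A B C D) ≤ frob A + frob B + frob C + frob D := by
    intro A B C D
    have h := frob_fromBlocks_sq A B C D
    have nA := frob_nonneg A; have nB := frob_nonneg B; have nC := frob_nonneg C
    have nD := frob_nonneg D; have nF := frob_nonneg (Matrix.fromBlocks A B C D)
    have h2 : frob (Matrix.fromBlocks A B C D) ^ 2 ≤ (frob A + frob B + frob C + frob D) ^ 2 := by
      nlinarith [mul_nonneg nA nB, mul_nonneg nA nC, mul_nonneg nA nD,
        mul_nonneg nB nC, mul_nonneg nB nD, mul_nonneg nC nD]
    nlinarith [h2]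
  rw [key]
  have h1 := sum_blk (L11 * U11 - H11) (L11 * U12 - H12) (L21 * U11 - H21)
      (L21 * U12 + L22 * U22 - H22)
  obtain ⟨hH11, hH12, hH21, hH22⟩ := blk H11 H12 H21 H22
  obtain ⟨hL11, -, hL21, hL22⟩ := blk L11 0 L21 L22
  obtain ⟨hU11, hU12, -, hU22⟩ := blk U11 U12 0 U22
  set FH := frob (Matrix.fromBlocks H11 H12 H21 H22)
  set FL := frob (Matrix.fromBlocks L11 0 L21 L22)
  set FU := frob (Matrix.fromBlocks U11 U12 0 U22)
  have nFL : 0 ≤ FL := frob_nonneg _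
  have nFU : 0 ≤ FU := frob_nonneg _
  have nL11 := frob_nonneg L11; have nL21 := frob_nonneg L21; have nL22 := frob_nonneg L22
  have nU11 := frob_nonneg U11; have nU12 := frob_nonneg U12; have nU22 := frob_nonneg U22
  nlinarith [mul_le_mul hL11 hU11 nU11 nFL, mul_le_mul hL11 hU12 nU12 nFL,
    mul_le_mul hL21 hU11 nU11 nFL, mul_le_mul hL21 hU12 nU12 nFL,
    mul_le_mul hL22 hU22 nU22 nFL, mul_nonneg nFL nFU]
end
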